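/- arXiv:2511.02080 — 5 statements merged into one kernel-verified Lean document; each statement's English description precedes it below -/
import Mathlib

section
/- Let A, B ⊆ ℤ and let 𝓕 be an upward-closed family of subsets of ℤ such that the intersection of any finitely many members of 𝓕 is syndetic. If B ⊆ A and for every a ∈ A the translate B − a belongs to 𝓕, then the difference set A \ B is not piecewise syndetic. -/
/-- A set `S ⊆ ℤ` is syndetic if finitely many translates of `S` cover `ℤ`. -/
def Syndetic (S : Set ℤ) : Prop := ∃ N : ℕ, ∀ m : ℤ, ∃ i : ℕ, i ≤ N ∧ m + i ∈ S

/-- A set `T ⊆ ℤ` is thick if it contains arbitrarily long intervals. -/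
def Thick (T : Set ℤ) : Prop := ∀ N : ℕ, ∃ z : ℤ, ∀ i : ℕ, i ≤ N → z + i ∈ T

/-- A set is piecewise syndetic if it is the intersection of a syndetic set and a thick set. -/
def PiecewiseSyndetic (A : Set ℤ) : Prop :=
  ∃ S T : Set ℤ, Syndetic S ∧ Thick T ∧ A = S ∩ T

theorem stmt_0 (A B : Set ℤ) (F : Set (Set ℤ))
    (hup : ∀ S G : Set ℤ, S ∈ F → S ⊆ G → G ∈ F)
    (hfin : ∀ G : Finset (Set ℤ), (↑G : Set (Set ℤ)) ⊆ F → Syndetic (⋂ S ∈ G, S))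
    (hBA : B ⊆ A)
    (hmem : ∀ a ∈ A, {m : ℤ | m + a ∈ B} ∈ F) :
    ¬ PiecewiseSyndetic (A \ B) := by
  classical
  rintro ⟨S, T, ⟨N, hS⟩, hT, hST⟩
  -- One "round" of the construction.
  have round : ∀ (b : ℤ) (G : Finset ℕ), (∀ g ∈ G, b + (g : ℤ) ∈ A) →
      ∃ m : ℤ, ∃ i : ℕ, i ≤ N ∧ (∀ g ∈ G, m + (b + (g : ℤ)) ∈ B) ∧
        m + (b + (i : ℤ)) ∈ A \ B := by
    intro b G hGA
    have hsub : (↑(G.image (fun g : ℕ => {m : ℤ | m + (b + (g : ℤ)) ∈ B})) :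
        Set (Set ℤ)) ⊆ F := by
      intro s hs
      simp only [Finset.coe_image, Set.mem_image, Finset.mem_coe] at hs
      obtain ⟨g, hg, rfl⟩ := hs
      exact hmem _ (hGA g hg)
    obtain ⟨M, hM⟩ := hfin _ hsub
    obtain ⟨z, hz⟩ := hT (M + N)
    obtain ⟨e, heM, he⟩ := hM (z - b)
    set m := z - b + (e : ℤ) with hm
    obtain ⟨i, hiN, hiS⟩ := hS (m + b)
    have hB : ∀ g ∈ G, m + (b + (g : ℤ)) ∈ B := by
      intro g hg
      have := Set.mem_iInter₂.mp he {n : ℤ | n + (b + (g : ℤ)) ∈ B}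
        (Finset.mem_image_of_mem _ hg)
      simpa using this
    refine ⟨m, i, hiN, hB, ?_⟩
    have hTi : m + (b + (i : ℤ)) ∈ T := by
      have heq : m + (b + (i : ℤ)) = z + ((e + i : ℕ) : ℤ) := by
        rw [hm]; push_cast; ring
      rw [heq]
      exact hz (e + i) (by omega)
    have hSi : m + (b + (i : ℤ)) ∈ S := by
      have heq : m + (b + (i : ℤ)) = (m + b) + (i : ℤ) := by ring
      rw [heq]; exact hiS
    rw [hST]
    exact ⟨hSi, hTi⟩
  -- Main induction: the gap set G ⊆ {0,…,N} grows each round.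
  have key : ∀ n : ℕ, ∀ (b : ℤ) (G : Finset ℕ), G ⊆ Finset.range (N + 1) →
      (∀ g ∈ G, b + (g : ℤ) ∈ A) → N + 1 ≤ G.card + n → False := by
    intro n
    induction n with
    | zero =>
      intro b G hsubG hGA hcard
      have hGeq : G = Finset.range (N + 1) := by
        apply Finset.eq_of_subset_of_card_le hsubG
        simpa using hcard
      obtain ⟨m, i, hiN, hB, hAB⟩ := round b G hGA
      have hiG : i ∈ G := by
        rw [hGeq]; exact Finset.mem_range.mpr (by omega)
      exact hAB.2 (hB i hiG)
    | succ n ih =>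
      intro b G hsubG hGA hcard
      obtain ⟨m, i, hiN, hB, hAB⟩ := round b G hGA
      by_cases hiG : i ∈ G
      · exact hAB.2 (hB i hiG)
      · refine ih (m + b) (insert i G) ?_ ?_ ?_
        · intro x hx
          rcases Finset.mem_insert.mp hx with rfl | hx
          · exact Finset.mem_range.mpr (by omega)
          · exact hsubG hx
        · intro g hg
          rcases Finset.mem_insert.mp hg with rfl | hg
          · have heq : m + b + (g : ℤ) = m + (b + (g : ℤ)) := by ring
            rw [heq]; exact hAB.1
          · have heq : m + b + (g : ℤ) = m + (b + (g : ℤ)) := by ring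
            rw [heq]; exact hBA (hB g hg)
        · rw [Finset.card_insert_of_notMem hiG]; omega
  exact key (N + 1) 0 ∅ (by simp) (by simp) (by simp)
end

section
/- A factor map between minimal topological dynamical systems is semiopen: if π : (X,T) → (Y,S) is a continuous surjection between compact metric spaces with π ∘ T = S ∘ π, and both systems are minimal, then for every nonempty open U ⊆ X the image π(U) has nonempty interior in Y. -/
/-!
Baire category. Choose a closed neighbourhood `K ⊆ U`. By minimality every `T`-orbit meets
the interior of `K`, so the compact sets `S⁻ⁿ(π K)` cover `Y`, and one of them has nonempty
interior. As `Sⁿ` is a homeomorphism, `π K ⊆ π U` then has nonempty interior too.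
-/

/-- A system `(α, T)` (with `T` an invertible transformation) is minimal if every
(two-sided) orbit is dense. -/
def IsMinimalSystem {α : Type*} [TopologicalSpace α] (T : Equiv.Perm α) : Prop :=
  ∀ x : α, Dense (Set.range fun n : ℤ => (T ^ n) x)

open Function Set

namespace Homeomorph

def toPerm {X : Type*} [TopologicalSpace X] : (X ≃ₜ X) →* Equiv.Perm X where
  toFun := Homeomorph.toEquiv
  map_one' := rfl
  map_mul' _ _ := rfl

theorem coe_zpow {X : Type*} [TopologicalSpace X] (e : X ≃ₜ X) (n : ℤ) :
    ⇑(e ^ n) = ⇑(e.toEquiv ^ n) :=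
  congrArg DFunLike.coe (map_zpow toPerm e n)

end Homeomorph

theorem Function.Semiconj.perm_zpow {α β : Type*} {π : α → β} {T : Equiv.Perm α}
    {S : Equiv.Perm β} (h : Semiconj π T S) : ∀ n : ℤ, Semiconj π ⇑(T ^ n) ⇑(S ^ n)
  | (k : ℕ) => by simpa only [zpow_natCast, Equiv.Perm.coe_pow] using h.iterate_right k
  | .negSucc k => by
    simpa only [zpow_negSucc, ← inv_pow, Equiv.Perm.coe_pow] using
      (h.inverses_right (ga' := ⇑T⁻¹) (gb' := ⇑S⁻¹) T.apply_symm_apply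
        S.symm_apply_apply).iterate_right (k + 1)

theorem IsMinimalSystem.exists_zpow_mem {α : Type*} [TopologicalSpace α] {T : Equiv.Perm α}
    (hT : IsMinimalSystem T) (x : α) {V : Set α} (hV : IsOpen V) (hne : V.Nonempty) :
    ∃ n : ℤ, (T ^ n) x ∈ V := by
  obtain ⟨_, ⟨n, rfl⟩, hn⟩ := (hT x).exists_mem_open hV hne
  exact ⟨n, hn⟩

theorem IsMinimalSystem.nonempty_interior_image {X Y : Type*} [TopologicalSpace X]
    [CompactSpace X] [RegularSpace X] [TopologicalSpace Y] [T2Space Y] [BaireSpace Y]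
    {T : Equiv.Perm X} (hT : IsMinimalSystem T) (S : Y ≃ₜ Y) {π : X → Y}
    (hπc : Continuous π) (hπs : Surjective π) (hπe : Semiconj π T S)
    {U : Set X} (hU : IsOpen U) (hne : U.Nonempty) : (interior (π '' U)).Nonempty := by
  obtain ⟨x, hx⟩ := hne
  obtain ⟨K, hKx, hKc, hKU⟩ := exists_mem_nhds_isClosed_subset (hU.mem_nhds hx)
  have hSn : ∀ n : ℤ, Semiconj π ⇑(T ^ n) ⇑(S ^ n) := fun n => by
    rw [S.coe_zpow]; exact hπe.perm_zpow (S := S.toEquiv) n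
  have hcover : ⋃ n : ℤ, ⇑(S ^ n) ⁻¹' (π '' K) = univ := by
    refine eq_univ_of_forall fun y => ?_
    obtain ⟨a, rfl⟩ := hπs y
    obtain ⟨n, hn⟩ :=
      hT.exists_zpow_mem a isOpen_interior ⟨x, mem_interior_iff_mem_nhds.mpr hKx⟩
    refine mem_iUnion.mpr ⟨n, ?_⟩
    rw [mem_preimage, ← hSn n a]
    exact mem_image_of_mem π (interior_subset hn)
  have hclosed : ∀ n : ℤ, IsClosed (⇑(S ^ n) ⁻¹' (π '' K)) := fun n =>
    ((hKc.isCompact.image hπc).isClosed).preimage (S ^ n).continuous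
  have : Nonempty Y := ⟨π x⟩
  obtain ⟨n, y, hy⟩ := nonempty_interior_of_iUnion_of_closed hclosed hcover
  rw [← Homeomorph.preimage_interior] at hy
  exact ⟨_, interior_mono (image_mono hKU) hy⟩

theorem stmt_5_general {α β : Type*} [MetricSpace α] [CompactSpace α]
    [MetricSpace β] [CompactSpace β]
    (T : Equiv.Perm α)
    (S : Equiv.Perm β) (hS : Continuous S) (hS' : Continuous S.symm)
    (hmT : IsMinimalSystem T)
    (π : α → β) (hπc : Continuous π) (hπs : Function.Surjective π)
    (hπe : π ∘ T = S ∘ π) :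
    ∀ U : Set α, IsOpen U → U.Nonempty → (interior (π '' U)).Nonempty := fun _ hU hne =>
  hmT.nonempty_interior_image ⟨S, hS, hS'⟩ hπc hπs (semiconj_iff_comp_eq.mpr hπe) hU hne

theorem stmt_5 {α β : Type*} [MetricSpace α] [CompactSpace α]
    [MetricSpace β] [CompactSpace β]
    (T : Equiv.Perm α) (hT : Continuous T) (hT' : Continuous T.symm)
    (S : Equiv.Perm β) (hS : Continuous S) (hS' : Continuous S.symm)
    (hmT : IsMinimalSystem T) (hmS : IsMinimalSystem S)
    (π : α → β) (hπc : Continuous π) (hπs : Function.Surjective π)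
    (hπe : π ∘ T = S ∘ π) :
    ∀ U : Set α, IsOpen U → U.Nonempty → (interior (π '' U)).Nonempty :=
  stmt_5_general T S hS hS' hmT π hπc hπs hπe
end

section
/- Let π : X → Y be an open factor map of topological dynamical systems with (Y,T) transitive. Suppose U₁,…,U_d, V₁,…,V_e ⊆ X are nonempty open sets with π U₁ ∩ ⋯ ∩ π U_d ≠ ∅ and π V₁ ∩ ⋯ ∩ π V_e ≠ ∅, and let p ∈ Pol_d, q ∈ Pol_e. Then there exist nonempty open sets W₁,…,W_{d+e} ⊆ X with π W₁ ∩ ⋯ ∩ π W_{d+e} ≠ ∅ and a tuple r ∈ Pol_{d+e} such that R_r(W₁,…,W_{d+e}) ⊆ R_p(U₁,…,U_d) ∩ R_q(V₁,…,V_e). -/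
/-- The return-time set `R_p(U₁,…,U_d)` along a polynomial tuple. -/
def returnTimes {α : Type*} (T : Equiv.Perm α) {d : ℕ} (p : Fin d → Polynomial ℤ)
    (U : Fin d → Set α) : Set ℤ :=
  {n : ℤ | ∃ x : α, ∀ i : Fin d, (T ^ (p i).eval n) x ∈ U i}

/-- `Pol_d`: tuples of pairwise distinct integer polynomials vanishing at `0`. -/
def MemPol {d : ℕ} (p : Fin d → Polynomial ℤ) : Prop :=
  (∀ i, (p i).eval 0 = 0) ∧ ∀ i j : Fin d, i ≠ j → p i ≠ p j

/-- A system `(β, S)` is (topologically) transitive if any two nonempty open sets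
can be moved to intersect. -/
def IsTransitiveSystem {β : Type*} [TopologicalSpace β] (S : Equiv.Perm β) : Prop :=
  ∀ A B : Set β, IsOpen A → A.Nonempty → IsOpen B → B.Nonempty →
    ∃ n : ℤ, (A ∩ (fun y => (S ^ n) y) ⁻¹' B).Nonempty

/-!
Transitivity of `Y` gives a time `m` and a point `z` with `z ∈ ⋂ π U_i` and
`S^m z ∈ ⋂ π V_j`. Take `W = (U₁,…,U_d, T^{-m}V₁,…,T^{-m}V_e)` and
`r = (p₁,…,p_d, q₁ + cX,…,q_e + cX)`, where the integer `c` is chosen so that no `q_j + cX`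
equals a `p_i` (this excludes only the finitely many linear coefficients of the `p_i - q_j`).
Then `z ∈ ⋂ π W_k`, and if `x` witnesses `n ∈ R_r(W)`, the point `x` witnesses
`n ∈ R_p(U)` while `T^{cn+m} x` witnesses `n ∈ R_q(V)`.
-/

open Polynomial

namespace Equiv.Perm

variable {α β : Type*}

theorem continuous_zpow [TopologicalSpace α] {T : Perm α} (hT : Continuous T)
    (hT' : Continuous T.symm) : ∀ k : ℤ, Continuous ⇑(T ^ k)
  | (n : ℕ) => by
    rw [zpow_natCast, coe_pow]
    exact hT.iterate n
  | .negSucc n => by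
    rw [zpow_negSucc, ← inv_pow, coe_pow, coe_inv]
    exact hT'.iterate _

theorem semiconj_zpow {π : α → β} {T : Perm α} {S : Perm β} (h : Function.Semiconj π T S) :
    ∀ k : ℤ, Function.Semiconj π ⇑(T ^ k) ⇑(S ^ k)
  | (n : ℕ) => by
    rw [zpow_natCast, zpow_natCast, coe_pow, coe_pow]
    exact h.iterate_right n
  | .negSucc n => by
    rw [zpow_negSucc, zpow_negSucc, ← inv_pow, ← inv_pow, coe_pow, coe_pow, coe_inv, coe_inv]
    exact (h.inverses_right T.apply_symm_apply S.symm_apply_apply).iterate_right _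

theorem image_preimage_of_semiconj {π : α → β} {T : Perm α} {S : Perm β}
    (h : Function.Semiconj π T S) (V : Set α) : π '' (T ⁻¹' V) = S ⁻¹' (π '' V) := by
  have h' : Function.Semiconj π T.symm S.symm :=
    h.inverses_right T.apply_symm_apply S.symm_apply_apply
  rw [← T.image_symm_eq_preimage, ← S.image_symm_eq_preimage, Set.image_image, Set.image_image,
    funext h']

end Equiv.Perm

theorem Polynomial.exists_forall_ne_add_C_mul_X {R ι κ : Type*} [CommRing R] [Infinite R]
    [Finite ι] [Finite κ] (p : ι → R[X]) (q : κ → R[X]) :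
    ∃ c : R, ∀ i j, p i ≠ q j + C c * X := by
  obtain ⟨c, hc⟩ :=
    (Set.finite_range fun ij : ι × κ => (p ij.1 - q ij.2).coeff 1).infinite_compl.nonempty
  refine ⟨c, fun i j h => hc ⟨(i, j), ?_⟩⟩
  simp [h]

theorem MemPol.add_C_mul_X {e : ℕ} {q : Fin e → ℤ[X]} (hq : MemPol q) (c : ℤ) :
    MemPol fun j => q j + C c * X :=
  ⟨fun j => by simp [hq.1 j], fun i j hij h => hq.2 i j hij (add_right_cancel h)⟩

theorem MemPol.append {d e : ℕ} {p : Fin d → ℤ[X]} {q : Fin e → ℤ[X]} (hp : MemPol p)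
    (hq : MemPol q) (hpq : ∀ i j, p i ≠ q j) : MemPol (Fin.append p q) := by
  refine ⟨Fin.addCases (by simpa using hp.1) (by simpa using hq.1), fun i j hij => ?_⟩
  cases i using Fin.addCases <;> cases j using Fin.addCases <;>
    simp only [Fin.append_left, Fin.append_right]
  · exact hp.2 _ _ (ne_of_apply_ne _ hij)
  · exact hpq _ _
  · exact (hpq _ _).symm
  · exact hq.2 _ _ (ne_of_apply_ne _ hij)

section returnTimes

variable {α : Type*} (T : Equiv.Perm α)

theorem returnTimes_append_subset {d e : ℕ} (p : Fin d → ℤ[X]) (q : Fin e → ℤ[X])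
    (U : Fin d → Set α) (V : Fin e → Set α) :
    returnTimes T (Fin.append p q) (Fin.append U V) ⊆ returnTimes T p U ∩ returnTimes T q V := by
  rintro n ⟨x, hx⟩
  rw [Fin.forall_fin_add] at hx
  simp only [Fin.append_left, Fin.append_right] at hx
  exact ⟨⟨x, hx.1⟩, ⟨x, hx.2⟩⟩

theorem returnTimes_add_C_mul_X_preimage_zpow_subset {e : ℕ} (q : Fin e → ℤ[X])
    (V : Fin e → Set α) (c m : ℤ) :
    returnTimes T (fun j => q j + C c * X) (fun j => ⇑(T ^ m) ⁻¹' V j) ⊆ returnTimes T q V := by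
  rintro n ⟨x, hx⟩
  refine ⟨(T ^ (c * n + m)) x, fun j => ?_⟩
  have hxj := hx j
  simp only [eval_add, eval_mul, eval_C, eval_X, Set.mem_preimage, ← Equiv.Perm.mul_apply,
    ← zpow_add] at hxj ⊢
  convert hxj using 3
  ring

end returnTimes

theorem Set.mem_iInter_image_finAppend {α β : Type*} {f : α → β} {d e : ℕ}
    {U : Fin d → Set α} {V : Fin e → Set α} {z : β} :
    z ∈ ⋂ i, f '' Fin.append U V i ↔ z ∈ ⋂ i, f '' U i ∧ z ∈ ⋂ j, f '' V j := by
  simp only [Set.mem_iInter, Fin.forall_fin_add, Fin.append_left, Fin.append_right]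

theorem stmt_8_general {α β : Type*} [MetricSpace α]
    [MetricSpace β]
    (T : Equiv.Perm α) (hT : Continuous T) (hT' : Continuous T.symm)
    (S : Equiv.Perm β)
    (htr : IsTransitiveSystem S)
    (π : α → β)
    (hπe : π ∘ T = S ∘ π) (hπo : IsOpenMap π)
    {d e : ℕ} (U : Fin d → Set α) (V : Fin e → Set α)
    (hUop : ∀ i, IsOpen (U i))
    (hVop : ∀ i, IsOpen (V i))
    (hU : (⋂ i, π '' U i).Nonempty) (hV : (⋂ i, π '' V i).Nonempty)
    (p : Fin d → Polynomial ℤ) (hp : MemPol p)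
    (q : Fin e → Polynomial ℤ) (hq : MemPol q) :
    ∃ (W : Fin (d + e) → Set α) (r : Fin (d + e) → Polynomial ℤ),
      (∀ i, (W i).Nonempty) ∧ (∀ i, IsOpen (W i)) ∧
      (⋂ i, π '' W i).Nonempty ∧ MemPol r ∧
      returnTimes T r W ⊆ returnTimes T p U ∩ returnTimes T q V := by
  have hπT : Function.Semiconj π T S := congrFun hπe
  have hopen : ∀ {k : ℕ} (A : Fin k → Set α), (∀ i, IsOpen (A i)) → IsOpen (⋂ i, π '' A i) :=
    fun A hA => isOpen_iInter_of_finite fun i => hπo _ (hA i)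
  obtain ⟨m, z, hzU, hzV⟩ := htr _ _ (hopen U hUop) hU (hopen V hVop) hV
  obtain ⟨c, hc⟩ := exists_forall_ne_add_C_mul_X p q
  set W := Fin.append U fun j => ⇑(T ^ m) ⁻¹' V j
  have hzW : z ∈ ⋂ i, π '' W i := by
    refine Set.mem_iInter_image_finAppend.2 ⟨hzU, ?_⟩
    simpa only [Set.mem_iInter, Set.mem_preimage,
      Equiv.Perm.image_preimage_of_semiconj (Equiv.Perm.semiconj_zpow hπT m)] using hzV
  refine ⟨W, Fin.append p fun j => q j + C c * X,
    fun i => Set.Nonempty.of_image ⟨z, Set.mem_iInter.1 hzW i⟩, ?_, ⟨z, hzW⟩,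
    hp.append (hq.add_C_mul_X c) hc, ?_⟩
  · refine Fin.addCases (by simpa [W] using hUop) fun j => ?_
    simpa [W] using (hVop j).preimage (Equiv.Perm.continuous_zpow hT hT' m)
  · exact (returnTimes_append_subset T _ _ _ _).trans
      (Set.inter_subset_inter_right _ (returnTimes_add_C_mul_X_preimage_zpow_subset T q V c m))

theorem stmt_8 {α β : Type*} [MetricSpace α] [CompactSpace α]
    [MetricSpace β] [CompactSpace β]
    (T : Equiv.Perm α) (hT : Continuous T) (hT' : Continuous T.symm)
    (S : Equiv.Perm β) (hS : Continuous S) (hS' : Continuous S.symm)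
    (htr : IsTransitiveSystem S)
    (π : α → β) (hπc : Continuous π) (hπs : Function.Surjective π)
    (hπe : π ∘ T = S ∘ π) (hπo : IsOpenMap π)
    {d e : ℕ} (U : Fin d → Set α) (V : Fin e → Set α)
    (hUne : ∀ i, (U i).Nonempty) (hUop : ∀ i, IsOpen (U i))
    (hVne : ∀ i, (V i).Nonempty) (hVop : ∀ i, IsOpen (V i))
    (hU : (⋂ i, π '' U i).Nonempty) (hV : (⋂ i, π '' V i).Nonempty)
    (p : Fin d → Polynomial ℤ) (hp : MemPol p)
    (q : Fin e → Polynomial ℤ) (hq : MemPol q) :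
    ∃ (W : Fin (d + e) → Set α) (r : Fin (d + e) → Polynomial ℤ),
      (∀ i, (W i).Nonempty) ∧ (∀ i, IsOpen (W i)) ∧
      (⋂ i, π '' W i).Nonempty ∧ MemPol r ∧
      returnTimes T r W ⊆ returnTimes T p U ∩ returnTimes T q V :=
  stmt_8_general T hT hT' S htr π hπe hπo U V hUop hVop hU hV p hp q hq
end

section
/- Let (X,T) be a minimal invertible system, d ∈ ℕ, p ∈ ℤ[x]^d essentially distinct, and U₁,…,U_d ⊆ X nonempty open. If R_p(U₁,…,U_d) is nonempty, then it is syndetic. (One may assume as a black box the IP polynomial Szemerédi theorem in the form: for any minimal system, any nonempty open V, and any tuple q of pairwise distinct polynomials vanishing at 0, the set R_q(V,…,V) is syndetic.) -/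
/-- A tuple of integer polynomials is essentially distinct if all pairwise
differences are non-constant. -/
def EssentiallyDistinct {d : ℕ} (p : Fin d → Polynomial ℤ) : Prop :=
  ∀ i j : Fin d, i ≠ j → (p i - p j).natDegree ≠ 0

/-!
If `a ∈ R_p(U)`, put `V = ⋂ᵢ T^{-pᵢ(a)} Uᵢ`, a nonempty open set, and `qᵢ(n) = pᵢ(n + a) - pᵢ(a)`.
The `qᵢ` vanish at `0` and are pairwise distinct because the `pᵢ` are essentially distinct, and
`n ∈ R_q(V,…,V)` implies `n + a ∈ R_p(U)`. So `R_p(U)` contains a translate of the syndetic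
set `R_q(V,…,V)`.
-/

open Polynomial

theorem Syndetic.mono {S S' : Set ℤ} (hS : Syndetic S) (h : S ⊆ S') : Syndetic S' := by
  obtain ⟨N, hN⟩ := hS
  exact ⟨N, fun m => (hN m).imp fun _ ⟨hiN, hi⟩ => ⟨hiN, h hi⟩⟩

theorem Syndetic.of_preimage_add {S : Set ℤ} (a : ℤ) (hS : Syndetic ((· + a) ⁻¹' S)) :
    Syndetic S := by
  obtain ⟨N, hN⟩ := hS
  refine ⟨N, fun m => ?_⟩
  obtain ⟨i, hiN, hi⟩ := hN (m - a)
  exact ⟨i, hiN, by simpa [sub_add_eq_add_sub] using hi⟩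

theorem Equiv.Perm.continuous_zpow_s9 {α : Type*} [TopologicalSpace α] (T : Equiv.Perm α)
    (hT : Continuous T) (hT' : Continuous T.symm) (n : ℤ) : Continuous ⇑(T ^ n) := by
  let toPerm : (α ≃ₜ α) →* Equiv.Perm α := MonoidHom.mk' Homeomorph.toEquiv fun _ _ => rfl
  let h : α ≃ₜ α := ⟨T, hT, hT'⟩
  have hpow : T ^ n = toPerm (h ^ n) := by rw [map_zpow]; rfl
  rw [hpow]
  exact (h ^ n).continuous

theorem returnTimes_mono {α : Type*} (T : Equiv.Perm α) {d : ℕ} (p : Fin d → ℤ[X])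
    {U U' : Fin d → Set α} (h : ∀ i, U i ⊆ U' i) : returnTimes T p U ⊆ returnTimes T p U' :=
  fun _ ⟨x, hx⟩ => ⟨x, fun i => h i (hx i)⟩

noncomputable def recenter (a : ℤ) (p : ℤ[X]) : ℤ[X] := taylor a p - C (p.eval a)

theorem eval_recenter (a : ℤ) (p : ℤ[X]) (n : ℤ) :
    (recenter a p).eval n = p.eval (n + a) - p.eval a := by
  simp [recenter, taylor_eval]

theorem eval_zero_recenter (a : ℤ) (p : ℤ[X]) : (recenter a p).eval 0 = 0 := by
  simp [eval_recenter]

theorem natDegree_sub_eq_zero_of_recenter_eq {a : ℤ} {p q : ℤ[X]}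
    (h : recenter a p = recenter a q) : (p - q).natDegree = 0 := by
  have hconst : taylor a (p - q) = C (p.eval a - q.eval a) := by
    rw [map_sub, C_sub]
    exact sub_eq_sub_iff_sub_eq_sub.mp h
  rw [← natDegree_taylor _ a, hconst, natDegree_C]

theorem EssentiallyDistinct.recenter_ne {d : ℕ} {p : Fin d → ℤ[X]} (hp : EssentiallyDistinct p)
    (a : ℤ) {i j : Fin d} (hij : i ≠ j) : recenter a (p i) ≠ recenter a (p j) :=
  fun h => hp i j hij (natDegree_sub_eq_zero_of_recenter_eq h)

theorem add_mem_returnTimes_of_mem_returnTimes_recenter {α : Type*} (T : Equiv.Perm α) {d : ℕ}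
    (p : Fin d → ℤ[X]) (U : Fin d → Set α) (a : ℤ) {n : ℤ}
    (hn : n ∈ returnTimes T (fun i => recenter a (p i)) fun i => ⇑(T ^ (p i).eval a) ⁻¹' U i) :
    n + a ∈ returnTimes T p U := by
  obtain ⟨x, hx⟩ := hn
  refine ⟨x, fun i => ?_⟩
  have hx' := hx i
  rwa [Set.mem_preimage, ← Equiv.Perm.mul_apply, ← zpow_add, eval_recenter,
    add_sub_cancel] at hx'

theorem stmt_9_general {α : Type*} [MetricSpace α]
    (T : Equiv.Perm α) (hT : Continuous T) (hT' : Continuous T.symm)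
    -- black box: the IP polynomial Szemerédi theorem
    (ipSzemeredi : ∀ (d' : ℕ) (q : Fin d' → Polynomial ℤ) (V : Set α),
      IsOpen V → V.Nonempty → (∀ i, (q i).eval 0 = 0) →
      (∀ i j : Fin d', i ≠ j → q i ≠ q j) →
      Syndetic (returnTimes T q fun _ => V))
    {d : ℕ} (p : Fin d → Polynomial ℤ) (hp : EssentiallyDistinct p)
    (U : Fin d → Set α) (hUop : ∀ i, IsOpen (U i))
    (hne : (returnTimes T p U).Nonempty) :
    Syndetic (returnTimes T p U) := by
  obtain ⟨a, x₀, hx₀⟩ := hne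
  let V : Set α := ⋂ i, ⇑(T ^ (p i).eval a) ⁻¹' U i
  have hVopen : IsOpen V :=
    isOpen_iInter_of_finite fun i => (hUop i).preimage (T.continuous_zpow_s9 hT hT' _)
  have hVne : V.Nonempty := ⟨x₀, Set.mem_iInter.2 hx₀⟩
  have hsyn := ipSzemeredi d (fun i => recenter a (p i)) V hVopen hVne
    (fun i => eval_zero_recenter a (p i)) fun i j hij => hp.recenter_ne a hij
  refine Syndetic.of_preimage_add a (hsyn.mono fun n hn => ?_)
  exact add_mem_returnTimes_of_mem_returnTimes_recenter T p U a
    (returnTimes_mono T _ (fun i => Set.iInter_subset _ i) hn)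

theorem stmt_9 {α : Type*} [MetricSpace α] [CompactSpace α]
    (T : Equiv.Perm α) (hT : Continuous T) (hT' : Continuous T.symm)
    (hmin : IsMinimalSystem T)
    -- black box: the IP polynomial Szemerédi theorem
    (ipSzemeredi : ∀ (d' : ℕ) (q : Fin d' → Polynomial ℤ) (V : Set α),
      IsOpen V → V.Nonempty → (∀ i, (q i).eval 0 = 0) →
      (∀ i j : Fin d', i ≠ j → q i ≠ q j) →
      Syndetic (returnTimes T q fun _ => V))
    {d : ℕ} (p : Fin d → Polynomial ℤ) (hp : EssentiallyDistinct p)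
    (U : Fin d → Set α) (hUne : ∀ i, (U i).Nonempty) (hUop : ∀ i, IsOpen (U i))
    (hne : (returnTimes T p U).Nonempty) :
    Syndetic (returnTimes T p U) :=
  stmt_9_general T hT hT' ipSzemeredi p hp U hUop hne
end

section
/- Let α ∈ ℝ/ℤ, ε > 0, and let T(x,y) = (x+α, y+x) on 𝕋². Let U ⊆ 𝕋² be the open ball of radius ε/4 centered at (0,0) (in the max metric ‖·‖ given by distance to 0 on each coordinate). If n ∈ ℤ satisfies U ∩ T^{−n}U ∩ T^{−2n}U ≠ ∅, then ‖n²α‖ < ε, where ‖x‖ denotes the distance from x ∈ ℝ/ℤ to 0. -/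
/-! Every iterate of `T` is affine, `Tⁿ(x, y) = (x + nα, y + nx + cₙ)`, and writing `T²ⁿ = Tⁿ ∘ Tⁿ`
the second coordinates of `z, Tⁿz, T²ⁿz` have second difference exactly `n²α`; the constant `cₙ`
cancels, so it never has to be computed. Each of the three points lies in `U`, hence
`‖n²α‖ < ε/4 + 2·ε/4 + ε/4`. -/

/-- The skew product `T(x, y) = (x + α, y + x)` on the 2-torus `𝕋² = (ℝ/ℤ)²`,
as an invertible transformation. -/
noncomputable def skew (α : UnitAddCircle) : Equiv.Perm (UnitAddCircle × UnitAddCircle) where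
  toFun p := (p.1 + α, p.2 + p.1)
  invFun p := (p.1 - α, p.2 - (p.1 - α))
  left_inv := by
    rintro ⟨x, y⟩
    simp only [Prod.mk.injEq]
    constructor <;> abel
  right_inv := by
    rintro ⟨x, y⟩
    simp only [Prod.mk.injEq]
    constructor <;> abel

theorem exists_skew_zpow_apply (α : UnitAddCircle) (n : ℤ) :
    ∃ c, ∀ z, (skew α ^ n) z = (z.1 + n • α, z.2 + n • z.1 + c) := by
  induction n using Int.induction_on with
  | zero => exact ⟨0, fun z => by simp⟩
  | succ k ih =>
    obtain ⟨c, hc⟩ := ih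
    refine ⟨c + (k : ℤ) • α, fun z => ?_⟩
    rw [zpow_add_one, Equiv.Perm.mul_apply, show skew α z = (z.1 + α, z.2 + z.1) from rfl, hc]
    ext <;> simp only [add_smul, one_smul, smul_add] <;> abel
  | pred k ih =>
    obtain ⟨c, hc⟩ := ih
    refine ⟨c - (-(k : ℤ) - 1) • α, fun z => ?_⟩
    rw [zpow_sub_one, Equiv.Perm.mul_apply,
      show (skew α)⁻¹ z = (z.1 - α, z.2 - (z.1 - α)) from rfl, hc]
    ext <;> simp only [sub_smul, neg_smul, one_smul, smul_sub] <;> abel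

theorem skew_zpow_snd_second_difference (α : UnitAddCircle) (n : ℤ)
    (z : UnitAddCircle × UnitAddCircle) :
    ((skew α ^ (2 * n)) z).2 - 2 • ((skew α ^ n) z).2 + z.2 = (n ^ 2) • α := by
  obtain ⟨c, hc⟩ := exists_skew_zpow_apply α n
  rw [two_mul, zpow_add, Equiv.Perm.mul_apply, hc, hc]
  simp only [smul_add, smul_smul, sq, two_nsmul]
  abel

theorem norm_sub_two_nsmul_add_le {E : Type*} [SeminormedAddCommGroup E] (a b c : E) :
    ‖a - 2 • b + c‖ ≤ ‖a‖ + 2 * ‖b‖ + ‖c‖ :=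
  calc ‖a - 2 • b + c‖ ≤ ‖a‖ + ‖2 • b‖ + ‖c‖ :=
        (norm_add_le _ _).trans (add_le_add_left (norm_sub_le _ _) _)
    _ ≤ ‖a‖ + 2 * ‖b‖ + ‖c‖ := by
        gcongr
        simpa using norm_nsmul_le (n := 2) (a := b)

theorem stmt_13_general (α : UnitAddCircle) (ε : ℝ) (n : ℤ)
    (U : Set (UnitAddCircle × UnitAddCircle))
    (hU : U = {q : UnitAddCircle × UnitAddCircle | ‖q.1‖ < ε / 4 ∧ ‖q.2‖ < ε / 4})
    (hn : ∃ z, z ∈ U ∧ (skew α ^ n) z ∈ U ∧ (skew α ^ (2 * n)) z ∈ U) :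
    ‖(n ^ 2) • α‖ < ε := by
  subst hU
  obtain ⟨z, ⟨-, h₀⟩, ⟨-, h₁⟩, ⟨-, h₂⟩⟩ := hn
  calc ‖(n ^ 2) • α‖
      = ‖((skew α ^ (2 * n)) z).2 - 2 • ((skew α ^ n) z).2 + z.2‖ := by
        rw [skew_zpow_snd_second_difference]
    _ ≤ ‖((skew α ^ (2 * n)) z).2‖ + 2 * ‖((skew α ^ n) z).2‖ + ‖z.2‖ :=
        norm_sub_two_nsmul_add_le _ _ _
    _ < ε := by linarith

theorem stmt_13 (α : UnitAddCircle) (ε : ℝ) (hε : 0 < ε) (n : ℤ)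
    (U : Set (UnitAddCircle × UnitAddCircle))
    (hU : U = {q : UnitAddCircle × UnitAddCircle | ‖q.1‖ < ε / 4 ∧ ‖q.2‖ < ε / 4})
    (hn : ∃ z, z ∈ U ∧ (skew α ^ n) z ∈ U ∧ (skew α ^ (2 * n)) z ∈ U) :
    ‖(n ^ 2) • α‖ < ε :=
  stmt_13_general α ε n U hU hn
end
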